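/- Let K = int(ℝ²₊) ∪ {(0,0)} ⊆ ℝ², S = ℝ × {0} ⊆ ℝ², f₁ = δ_K and f₂ = δ_S. Then f₁ and f₂ are proper convex functions with f_i(0,0) = (cl f_i)(0,0) for i = 1,2, and for every ε > 0 one has ∂_ε(f₁+f₂)(0,0) = ℝ² while cl( ∂_ε f₁(0,0) + ∂_ε f₂(0,0) ) = (−∞,0] × ℝ; in particular the inclusion ∂_ε(f₁+f₂)(0,0) ⊆ cl( ∂_ε f₁(0,0) + ∂_ε f₂(0,0) ) fails. -/

import Mathlib

/-! At a point `x ∈ A`, `∂_ε δ_A(x)` is the set of `p` with `⟨p, y - x⟩ ≤ ε` for all `y ∈ A`.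
Since `K` and `S` are cones, scaling turns this into `∂_ε f₁(0,0) = (-∞,0]²` and
`∂_ε f₂(0,0) = {0} × ℝ`, whose sum `(-∞,0] × ℝ` is already closed. But `K ∩ S = {(0,0)}`, so
`f₁ + f₂ = δ_{(0,0)}` and its `ε`-subdifferential at the origin is all of `ℝ²`. -/

open Filter Topology Pointwise

noncomputable section

open Classical in
/-- The indicator function of a set, with values in the extended reals. -/
def ind {Y : Type*} (A : Set Y) (x : Y) : EReal := if x ∈ A then 0 else ⊤

/-- A function into the extended reals is proper if it never takes the value `⊥`
and is not identically `⊤`. -/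
def Proper {Y : Type*} (f : Y → EReal) : Prop := (∀ x, f x ≠ ⊥) ∧ ∃ x, f x ≠ ⊤

/-- Convexity for extended-real-valued functions. -/
def EConvexOn {Y : Type*} [AddCommGroup Y] [Module ℝ Y] (f : Y → EReal) : Prop :=
  ∀ x y : Y, ∀ a b : ℝ, 0 < a → 0 < b → a + b = 1 →
    f (a • x + b • y) ≤ (a : EReal) * f x + (b : EReal) * f y

/-- The lower semicontinuous hull of `f` (the function whose epigraph is the closure of
the epigraph of `f`), described via the liminf. -/
def lscHull {Y : Type*} [TopologicalSpace Y] (f : Y → EReal) (x : Y) : EReal :=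
  Filter.liminf f (nhds x)

/-- The `ε`-subdifferential of `f : ℝ² → ℝ̄` at `x`, as a subset of `ℝ²` (the dual of
`ℝ²` being identified with `ℝ²` via the usual pairing).  It is empty unless `f x` is
finite. -/
def epsSubdiff2 (f : ℝ × ℝ → EReal) (ε : ℝ) (x : ℝ × ℝ) : Set (ℝ × ℝ) :=
  {p | ∃ r : ℝ, f x = (r : EReal) ∧
    ∀ y : ℝ × ℝ, ((r + (p.1 * (y.1 - x.1) + p.2 * (y.2 - x.2)) - ε : ℝ) : EReal) ≤ f y}

/-- The cone `K = int(ℝ²₊) ∪ {(0,0)}`. -/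
def K : Set (ℝ × ℝ) := {p : ℝ × ℝ | 0 < p.1 ∧ 0 < p.2} ∪ {(0, 0)}

/-- The subspace `S = ℝ × {0}`. -/
def S : Set (ℝ × ℝ) := {p : ℝ × ℝ | p.2 = 0}

/-- The function `f₁ = δ_K`. -/
def f₁ : ℝ × ℝ → EReal := fun p => ind K p

/-- The function `f₂ = δ_S`. -/
def f₂ : ℝ × ℝ → EReal := fun p => ind S p

section Indicator

variable {Y : Type*} {A : Set Y} {x : Y}

lemma ind_of_mem (h : x ∈ A) : ind A x = 0 := if_pos h

lemma ind_of_notMem (h : x ∉ A) : ind A x = ⊤ := if_neg h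

lemma ind_nonneg (A : Set Y) (x : Y) : 0 ≤ ind A x := by
  unfold ind; split_ifs <;> simp

lemma ind_ne_bot (A : Set Y) (x : Y) : ind A x ≠ ⊥ :=
  ((ind_nonneg A x).trans_lt' EReal.bot_lt_zero).ne'

lemma ind_add_ind (A B : Set Y) (x : Y) : ind A x + ind B x = ind (A ∩ B) x := by
  unfold ind; split_ifs <;> simp_all

lemma proper_ind (hA : A.Nonempty) : Proper (ind A) :=
  ⟨ind_ne_bot A, hA.imp fun _ hx => by simp [ind_of_mem hx]⟩

lemma econvexOn_ind [AddCommGroup Y] [Module ℝ Y] (hA : Convex ℝ A) : EConvexOn (ind A) := by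
  intro x y a b ha hb hab
  by_cases hx : x ∈ A
  · by_cases hy : y ∈ A
    · simp [ind_of_mem hx, ind_of_mem hy, ind_of_mem (hA hx hy ha.le hb.le hab)]
    · rw [ind_of_notMem hy, EReal.coe_mul_top_of_pos hb, ind_of_mem hx, mul_zero, zero_add]
      exact le_top
  · have hby : 0 ≤ (b : EReal) * ind A y :=
      EReal.mul_nonneg (EReal.coe_nonneg.2 hb.le) (ind_nonneg A y)
    rw [ind_of_notMem hx, EReal.coe_mul_top_of_pos ha,
      EReal.top_add_of_ne_bot (hby.trans_lt' EReal.bot_lt_zero).ne']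
    exact le_top

end Indicator

lemma lscHull_le {Y : Type*} [TopologicalSpace Y] (f : Y → EReal) (x : Y) : lscHull f x ≤ f x :=
  liminf_le_of_le (by isBoundedDefault) fun _ hb => hb.self_of_nhds

lemma lscHull_eq_of_forall_le {Y : Type*} [TopologicalSpace Y] {f : Y → EReal} {x : Y}
    (h : ∀ y, f x ≤ f y) : lscHull f x = f x :=
  (lscHull_le f x).antisymm (le_liminf_of_le (by isBoundedDefault) (Eventually.of_forall h))

lemma ind_eq_lscHull_of_mem {Y : Type*} [TopologicalSpace Y] {A : Set Y} {x : Y} (h : x ∈ A) :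
    ind A x = lscHull (ind A) x :=
  (lscHull_eq_of_forall_le fun y => (ind_of_mem h).trans_le (ind_nonneg A y)).symm

lemma mem_epsSubdiff2_ind_iff {A : Set (ℝ × ℝ)} {x : ℝ × ℝ} (hx : x ∈ A) {ε : ℝ}
    {p : ℝ × ℝ} :
    p ∈ epsSubdiff2 (ind A) ε x ↔ ∀ y ∈ A, p.1 * (y.1 - x.1) + p.2 * (y.2 - x.2) ≤ ε := by
  constructor
  · rintro ⟨r, hr, h⟩ y hy
    rw [ind_of_mem hx] at hr
    obtain rfl : r = 0 := by exact_mod_cast hr.symm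
    have := h y
    rw [ind_of_mem hy, EReal.coe_nonpos] at this
    linarith
  · refine fun h => ⟨0, by simp [ind_of_mem hx], fun y => ?_⟩
    by_cases hy : y ∈ A
    · rw [ind_of_mem hy, EReal.coe_nonpos]
      linarith [h y hy]
    · simp [ind_of_notMem hy]

lemma nonpos_of_forall_pos_mul_le {a c : ℝ} (h : ∀ t : ℝ, 0 < t → t * a ≤ c) : a ≤ 0 := by
  by_contra! ha
  have := h ((|c| + 1) / a) (by positivity)
  rw [div_mul_cancel₀ _ ha.ne'] at this
  linarith [le_abs_self c]

lemma eq_zero_of_forall_mul_le {a c : ℝ} (h : ∀ t : ℝ, t * a ≤ c) : a = 0 :=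
  le_antisymm (nonpos_of_forall_pos_mul_le fun t _ => h t)
    (neg_nonpos.1 (nonpos_of_forall_pos_mul_le fun t _ => by simpa using h (-t)))

lemma Convex.union_singleton_zero {E : Type*} [AddCommGroup E] [Module ℝ E] {C : Set E}
    (hC : Convex ℝ C) (hsmul : ∀ x ∈ C, ∀ t : ℝ, 0 < t → t • x ∈ C) : Convex ℝ (C ∪ {0}) := by
  rw [convex_iff_forall_pos]
  rintro x (hx | rfl) y (hy | rfl) a b ha hb hab
  · exact Or.inl (hC hx hy ha.le hb.le hab)
  · rw [smul_zero, add_zero]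
    exact Or.inl (hsmul x hx a ha)
  · rw [smul_zero, zero_add]
    exact Or.inl (hsmul y hy b hb)
  · simp

lemma convex_K : Convex ℝ K := by
  refine ((convex_Ioi 0).prod (convex_Ioi 0)).union_singleton_zero ?_
  rintro x ⟨hx₁, hx₂⟩ t ht
  exact ⟨mul_pos ht hx₁, mul_pos ht hx₂⟩

lemma convex_S : Convex ℝ S := convex_hyperplane (LinearMap.snd ℝ ℝ ℝ).isLinear 0

lemma zero_mem_K : ((0 : ℝ), (0 : ℝ)) ∈ K := Or.inr rfl

lemma zero_mem_S : ((0 : ℝ), (0 : ℝ)) ∈ S := rfl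

lemma K_inter_S : K ∩ S = {(0, 0)} := by
  ext ⟨u, v⟩
  simp only [K, S, Set.mem_inter_iff, Set.mem_union, Set.mem_ofPred_eq, Set.mem_singleton_iff,
    Prod.mk.injEq]
  constructor
  · rintro ⟨⟨-, hv⟩ | h, rfl⟩
    exacts [absurd hv (lt_irrefl 0), h]
  · rintro ⟨rfl, rfl⟩
    simp

section EpsSubdiff

variable {ε : ℝ}

lemma epsSubdiff2_f₁ (hε : 0 ≤ ε) : epsSubdiff2 f₁ ε (0, 0) = Set.Iic 0 ×ˢ Set.Iic 0 := by
  ext p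
  rw [show f₁ = ind K from rfl, mem_epsSubdiff2_ind_iff zero_mem_K]
  simp only [sub_zero]
  refine ⟨fun h => ⟨?_, ?_⟩, fun ⟨hp₁, hp₂⟩ y hy => ?_⟩
  · refine nonpos_of_forall_pos_mul_le (c := ε - p.2) fun t ht => ?_
    have := h (t, 1) (Or.inl ⟨ht, one_pos⟩)
    dsimp at this
    linarith
  · refine nonpos_of_forall_pos_mul_le (c := ε - p.1) fun t ht => ?_
    have := h (1, t) (Or.inl ⟨one_pos, ht⟩)
    dsimp at this
    linarith
  · rcases hy with ⟨hy₁, hy₂⟩ | rfl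
    · linarith [mul_nonpos_of_nonpos_of_nonneg hp₁ hy₁.le,
        mul_nonpos_of_nonpos_of_nonneg hp₂ hy₂.le]
    · simpa using hε

lemma epsSubdiff2_f₂ (hε : 0 ≤ ε) : epsSubdiff2 f₂ ε (0, 0) = {0} ×ˢ Set.univ := by
  ext p
  rw [show f₂ = ind S from rfl, mem_epsSubdiff2_ind_iff zero_mem_S]
  simp only [sub_zero]
  refine ⟨fun h => ⟨eq_zero_of_forall_mul_le (c := ε) fun t => ?_, trivial⟩, ?_⟩
  · simpa [mul_comm] using h (t, 0) rfl
  · rintro ⟨hp₁, -⟩ y (hy : y.2 = 0)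
    simpa [Set.mem_singleton_iff.1 hp₁, hy] using hε

lemma epsSubdiff2_f₁_add_f₂ (hε : 0 ≤ ε) :
    epsSubdiff2 (fun p => f₁ p + f₂ p) ε (0, 0) = Set.univ := by
  have hsum : (fun p => f₁ p + f₂ p) = ind (K ∩ S) := funext (ind_add_ind K S)
  ext p
  rw [hsum, K_inter_S, mem_epsSubdiff2_ind_iff (Set.mem_singleton _)]
  simpa using hε

lemma epsSubdiff2_f₁_add_epsSubdiff2_f₂ (hε : 0 ≤ ε) :
    epsSubdiff2 f₁ ε (0, 0) + epsSubdiff2 f₂ ε (0, 0) = Set.Iic 0 ×ˢ Set.univ := by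
  rw [epsSubdiff2_f₁ hε, epsSubdiff2_f₂ hε, Set.prod_add_prod_comm, Set.singleton_zero, add_zero,
    Set.add_univ Set.nonempty_Iic]

end EpsSubdiff

/-- `f₁, f₂` are proper convex functions coinciding with their lower semicontinuous
hulls at `(0,0)`, yet for every `ε > 0` one has `∂_ε(f₁+f₂)(0,0) = ℝ²` while
`cl(∂_ε f₁(0,0) + ∂_ε f₂(0,0)) = (−∞,0] × ℝ`, so the inclusion
`∂_ε(f₁+f₂)(0,0) ⊆ cl(∂_ε f₁(0,0) + ∂_ε f₂(0,0))` fails. -/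
theorem eps_subdiff_sum_not_subset_closure :
    Proper f₁ ∧ Proper f₂ ∧ EConvexOn f₁ ∧ EConvexOn f₂ ∧
      f₁ (0, 0) = lscHull f₁ (0, 0) ∧ f₂ (0, 0) = lscHull f₂ (0, 0) ∧
      ∀ ε : ℝ, 0 < ε →
        epsSubdiff2 (fun p => f₁ p + f₂ p) ε (0, 0) = (Set.univ : Set (ℝ × ℝ)) ∧
        closure (epsSubdiff2 f₁ ε (0, 0) + epsSubdiff2 f₂ ε (0, 0)) =
          Set.Iic (0 : ℝ) ×ˢ (Set.univ : Set ℝ) ∧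
        ¬ (epsSubdiff2 (fun p => f₁ p + f₂ p) ε (0, 0) ⊆
            closure (epsSubdiff2 f₁ ε (0, 0) + epsSubdiff2 f₂ ε (0, 0))) := by
  refine ⟨proper_ind ⟨_, zero_mem_K⟩, proper_ind ⟨_, zero_mem_S⟩, econvexOn_ind convex_K,
    econvexOn_ind convex_S, ind_eq_lscHull_of_mem zero_mem_K,
    ind_eq_lscHull_of_mem zero_mem_S, fun ε hε => ?_⟩
  have hcl : closure (epsSubdiff2 f₁ ε (0, 0) + epsSubdiff2 f₂ ε (0, 0)) =
      Set.Iic 0 ×ˢ Set.univ := by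
    rw [epsSubdiff2_f₁_add_epsSubdiff2_f₂ hε.le]
    exact (isClosed_Iic.prod isClosed_univ).closure_eq
  refine ⟨epsSubdiff2_f₁_add_f₂ hε.le, hcl, fun hsub => ?_⟩
  rw [epsSubdiff2_f₁_add_f₂ hε.le, hcl] at hsub
  exact absurd (hsub (Set.mem_univ (1, 0))).1 (by norm_num)
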